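/- arXiv:2110.11693 — 2 statements merged into one kernel-verified Lean document; each statement's English description precedes it below -/
import Mathlib

section
/- Consider the setting: $Y$ a Hilbert space, $S \in \mathcal{L}(L^2(\Omega), Y)$, $\alpha > 0$, $\gamma > 0$, $u_a, w_1, w_2 \in L^2(\Omega)$, and monotone C^1 penalty $\pi$ with bounded derivative. If $u_i \in L^2(\Omega)$ satisfy $S^*(Su_i - y_d) + \alpha(u_i - w_i) + \gamma\pi(u_i - u_a) = 0$ for $i = 1, 2$, then $\|u_2 - u_1\|_{L^2(\Omega)} \le \|w_2 - w_1\|_{L^2(\Omega)}$. -/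
/-!
The solution map is the resolvent `w ↦ (I + α⁻¹ A)⁻¹ w` of the monotone operator
`A u = S*(S u - y_d) + γ π(u - u_a)`, and resolvents of monotone operators are nonexpansive:
subtracting the two equations and testing with `u₂ - u₁` gives
`α ⟪(w₂ - w₁) - (u₂ - u₁), u₂ - u₁⟫ ≥ 0`, whence `‖u₂ - u₁‖² ≤ ⟪w₂ - w₁, u₂ - u₁⟫`, and
Cauchy–Schwarz concludes.
-/

open MeasureTheory

open scoped RealInnerProductSpace

section Resolvent

variable {E : Type*} [NormedAddCommGroup E] [InnerProductSpace ℝ E]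

theorem norm_le_of_inner_sub_nonneg {d w : E} (h : 0 ≤ ⟪w - d, d⟫) : ‖d‖ ≤ ‖w‖ := by
  rw [inner_sub_left, sub_nonneg, real_inner_self_eq_norm_sq] at h
  rcases (norm_nonneg d).eq_or_lt with hd | hd
  · rw [← hd]
    exact norm_nonneg w
  · refine le_of_mul_le_mul_right ?_ hd
    calc ‖d‖ * ‖d‖ = ‖d‖ ^ 2 := (sq _).symm
      _ ≤ ⟪w, d⟫ := h
      _ ≤ ‖w‖ * ‖d‖ := real_inner_le_norm w d

theorem norm_sub_le_of_inner_nonneg_of_add_smul_eq_zero {α : ℝ} (hα : 0 < α)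
    {u₁ u₂ w₁ w₂ v₁ v₂ : E} (hv : 0 ≤ ⟪v₂ - v₁, u₂ - u₁⟫)
    (h₁ : v₁ + α • (u₁ - w₁) = 0) (h₂ : v₂ + α • (u₂ - w₂) = 0) :
    ‖u₂ - u₁‖ ≤ ‖w₂ - w₁‖ := by
  have hdiff : v₂ - v₁ = α • ((w₂ - w₁) - (u₂ - u₁)) := by
    rw [eq_neg_of_add_eq_zero_left h₁, eq_neg_of_add_eq_zero_left h₂]
    module
  rw [hdiff, real_inner_smul_left] at hv
  exact norm_le_of_inner_sub_nonneg (nonneg_of_mul_nonneg_right hv hα)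

end Resolvent

theorem MeasureTheory.L2.inner_sub_nonneg_of_monotone {Ω : Type*} [MeasurableSpace Ω]
    {m : Measure Ω} (f : Ω → ℝ → ℝ) (hf : ∀ ω, Monotone (f ω)) {u₁ u₂ ξ₁ ξ₂ : Lp ℝ 2 m}
    (hξ₁ : ∀ᵐ ω ∂m, ξ₁ ω = f ω (u₁ ω)) (hξ₂ : ∀ᵐ ω ∂m, ξ₂ ω = f ω (u₂ ω)) :
    0 ≤ ⟪ξ₂ - ξ₁, u₂ - u₁⟫ := by
  rw [L2.inner_def]
  refine integral_nonneg_of_ae ?_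
  filter_upwards [hξ₁, hξ₂, Lp.coeFn_sub ξ₂ ξ₁, Lp.coeFn_sub u₂ u₁] with ω h₁ h₂ hξ hu
  rw [hξ, hu, Pi.sub_apply, Pi.sub_apply, h₁, h₂, real_inner_eq_re_inner, RCLike.inner_apply,
    conj_trivial, RCLike.re_to_real, mul_comm]
  exact (monovary_id_iff.2 (hf ω)).sub_mul_sub_nonneg _ _

theorem ContinuousLinearMap.inner_adjoint_sub_nonneg {E F : Type*} [NormedAddCommGroup E]
    [InnerProductSpace ℝ E] [CompleteSpace E] [NormedAddCommGroup F] [InnerProductSpace ℝ F]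
    [CompleteSpace F] (S : E →L[ℝ] F) (u₁ u₂ : E) (y : F) :
    0 ≤ ⟪S.adjoint (S u₂ - y) - S.adjoint (S u₁ - y), u₂ - u₁⟫ := by
  rw [← map_sub, adjoint_inner_left, sub_sub_sub_cancel_right, ← map_sub]
  exact real_inner_self_nonneg

theorem regularized_solution_lipschitz {Ω : Type*} [MeasurableSpace Ω] (m : Measure Ω)
    {Y : Type*} [NormedAddCommGroup Y] [InnerProductSpace ℝ Y] [CompleteSpace Y]
    (S : Lp ℝ 2 m →L[ℝ] Y) (α γ : ℝ) (hα : 0 < α) (hγ : 0 < γ)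
    (pi : ℝ → ℝ) (hmono : Monotone pi)
    (ua w₁ w₂ u₁ u₂ : Lp ℝ 2 m) (yd : Y)
    (ξ₁ ξ₂ : Lp ℝ 2 m)
    (hξ₁ : ∀ᵐ ω ∂m, ξ₁ ω = pi (u₁ ω - ua ω))
    (hξ₂ : ∀ᵐ ω ∂m, ξ₂ ω = pi (u₂ ω - ua ω))
    (he₁ : S.adjoint (S u₁ - yd) + α • (u₁ - w₁) + γ • ξ₁ = 0)
    (he₂ : S.adjoint (S u₂ - yd) + α • (u₂ - w₂) + γ • ξ₂ = 0) :
    ‖u₂ - u₁‖ ≤ ‖w₂ - w₁‖ := by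
  have hpenalty : 0 ≤ ⟪ξ₂ - ξ₁, u₂ - u₁⟫ :=
    L2.inner_sub_nonneg_of_monotone (fun ω x ↦ pi (x - ua ω))
      (fun ω _ _ hxy ↦ hmono (sub_le_sub_right hxy _)) hξ₁ hξ₂
  refine norm_sub_le_of_inner_nonneg_of_add_smul_eq_zero hα
    (v₁ := S.adjoint (S u₁ - yd) + γ • ξ₁) (v₂ := S.adjoint (S u₂ - yd) + γ • ξ₂) ?_
    (by rwa [add_right_comm] at he₁) (by rwa [add_right_comm] at he₂)
  rw [add_sub_add_comm, ← smul_sub, inner_add_left, real_inner_smul_left]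
  exact add_nonneg (S.inner_adjoint_sub_nonneg u₁ u₂ yd) (mul_nonneg hγ.le hpenalty)
end

section
/- Consider the linear MPCC on a measure space $(\Omega, \mathcal{A}, m)$ with $m(\Omega) < \infty$: for $Av := v + \langle 1, v\rangle_{L^2}$, data $F_u, F_w, F_\xi \in L^2(\Omega)$, a measurable partition $\Omega^{0+}, \Omega^{00}, \Omega^{+0}$ of $\Omega$, measurable $\Omega_w \subset \Omega$, and measurable $\beta \subset \Omega^{00}$. Suppose $m(\Omega^{+0}) > 0$ and $(p, \mu, \nu, \lambda) \in L^2(\Omega)^4$ satisfies the KKT system: $F_u + A^* p + \mu = 0$, $F_w - p + \lambda = 0$, $F_\xi - p + \nu = 0$, $\mu \le 0$ a.e.\ on $\Omega^{00}\setminus\beta$, $\mu = 0$ a.e.\ on $\Omega^{+0}$, $\nu \le 0$ a.e.\ on $\beta$, $\nu = 0$ a.e.\ on $\Omega^{0+}$, $\lambda \le 0$ a.e.\ on $\Omega_w$, $\lambda = 0$ a.e.\ on $\Omega \setminus \Omega_w$. Then $\langle 1, |p|\rangle_{L^2} \le (2 + m(\Omega^{+0})^{-1})\, c_0$ pointwise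 a.e., where $c_0 := A^*(|F_u|+|F_w|+|F_\xi|) + |F_u|+|F_w|+|F_\xi|$. -/
open MeasureTheory RealInnerProductSpace

/-!
With `A v = v + ∫ v` self-adjoint, `c := ∫ p` and `g := |Fu| + |Fw| + |Fxi|`: the sign of `λ`
gives `p ≤ Fw`, whence `∫ |p| ≤ 2 ∫ |Fw| - c`; on `Ω⁺⁰`, where `μ = 0`, stationarity gives
`-c = Fu + p ≤ g`, and averaging over `Ω⁺⁰` gives `-c ≤ ∫ g / m(Ω⁺⁰)`. Hence
`∫ |p| ≤ (2 + m(Ω⁺⁰)⁻¹) ∫ g ≤ (2 + m(Ω⁺⁰)⁻¹) (2 g + ∫ g) = (2 + m(Ω⁺⁰)⁻¹) c₀`.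
-/

theorem ContinuousLinearMap.adjoint_eq_self_of_apply_eq_add_inner_smul {E : Type*}
    [NormedAddCommGroup E] [InnerProductSpace ℝ E] [CompleteSpace E] (e : E)
    (A : E →L[ℝ] E) (hA : ∀ v, A v = v + ⟪e, v⟫ • e) : ContinuousLinearMap.adjoint A = A := by
  rw [← ContinuousLinearMap.isSelfAdjoint_iff', ContinuousLinearMap.isSelfAdjoint_iff_isSymmetric]
  intro x y
  simp only [ContinuousLinearMap.coe_coe, hA, inner_add_left, inner_add_right,
    real_inner_smul_left, real_inner_smul_right, real_inner_comm x e]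
  ring

namespace MeasureTheory

variable {Ω : Type*} [MeasurableSpace Ω] {m : Measure Ω}

theorem Lp.ae_add_eq_zero {E : Type*} [NormedAddCommGroup E] {q : ENNReal} {f g : Lp E q m}
    (h : f + g = 0) : ∀ᵐ ω ∂m, f ω + g ω = 0 := by
  have hadd := Lp.coeFn_add f g
  rw [h] at hadd
  filter_upwards [hadd, Lp.coeFn_zero E q m] with ω hadd hzero
  rw [← Pi.add_apply, ← hadd, hzero, Pi.zero_apply]

theorem Lp.ae_le_of_sub_add_eq_zero {q : ENNReal} {f g l : Lp ℝ q m} (h : f - g + l = 0)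
    (hl : ∀ᵐ ω ∂m, l ω ≤ 0) : g ≤ᵐ[m] f := by
  filter_upwards [Lp.ae_add_eq_zero h, Lp.coeFn_sub f g, hl] with ω hω hsub hlω
  rw [hsub, Pi.sub_apply] at hω
  linarith

theorem L2.inner_eq_integral_of_ae_eq_one {one : Lp ℝ 2 m} (hone : ∀ᵐ ω ∂m, one ω = 1)
    (f : Lp ℝ 2 m) : ⟪one, f⟫ = ∫ ω, f ω ∂m := by
  rw [L2.inner_def]
  refine integral_congr_ae ?_
  filter_upwards [hone] with ω h
  simp [h]

theorem L2.coeFn_add_inner_smul_of_ae_eq_one {one : Lp ℝ 2 m} (hone : ∀ᵐ ω ∂m, one ω = 1)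
    (v : Lp ℝ 2 m) : ⇑(v + ⟪one, v⟫ • one) =ᵐ[m] fun ω => v ω + ∫ x, v x ∂m := by
  rw [L2.inner_eq_integral_of_ae_eq_one hone]
  filter_upwards [Lp.coeFn_add v ((∫ x, v x ∂m) • one), Lp.coeFn_smul (∫ x, v x ∂m) one, hone]
    with ω hadd hsmul h1
  rw [hadd, Pi.add_apply, hsmul, Pi.smul_apply, smul_eq_mul, h1, mul_one]

theorem integral_abs_le_two_mul_integral_abs_sub_integral {f g : Ω → ℝ} (hf : Integrable f m)
    (hg : Integrable g m) (hfg : f ≤ᵐ[m] g) :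
    ∫ ω, |f ω| ∂m ≤ 2 * ∫ ω, |g ω| ∂m - ∫ ω, f ω ∂m := by
  have hpointwise : ∀ᵐ ω ∂m, |f ω| ≤ 2 * |g ω| - f ω := by
    filter_upwards [hfg] with ω h
    rcases le_total 0 (f ω) with hf0 | hf0
    · rw [abs_of_nonneg hf0]; linarith [abs_of_nonneg (hf0.trans h)]
    · rw [abs_of_nonpos hf0]; linarith [abs_nonneg (g ω)]
  rw [← integral_const_mul, ← integral_sub (hg.abs.const_mul 2) hf]
  exact integral_mono_ae hf.abs ((hg.abs.const_mul 2).sub hf) hpointwise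

theorem le_integral_div_measureReal_of_ae_le {s : Set Ω} (hs : 0 < m s) (hs' : m s ≠ ⊤)
    {h : Ω → ℝ} {a : ℝ} (hh : Integrable h m) (h0 : 0 ≤ᵐ[m] h)
    (ha : ∀ᵐ ω ∂m, ω ∈ s → a ≤ h ω) : a ≤ (∫ ω, h ω ∂m) / m.real s := by
  have hrestrict : ∀ᵐ ω ∂m.restrict s, a ≤ h ω :=
    (ae_restrict_iff₀ (aestronglyMeasurable_const.nullMeasurableSet_le
      hh.aestronglyMeasurable.restrict)).2 ha
  have hsReal : 0 < m.real s := ENNReal.toReal_pos hs.ne' hs'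
  rw [le_div_iff₀ hsReal]
  calc a * m.real s = ∫ _ in s, a ∂m := by rw [setIntegral_const, smul_eq_mul, mul_comm]
    _ ≤ ∫ ω in s, h ω ∂m := integral_mono_ae (integrableOn_const hs') hh.integrableOn hrestrict
    _ ≤ ∫ ω, h ω ∂m := setIntegral_le_integral hh h0

end MeasureTheory

section RankOnePerturbation

variable {Ω : Type*} [MeasurableSpace Ω] {m : Measure Ω} {one : Lp ℝ 2 m}
  {A : Lp ℝ 2 m →L[ℝ] Lp ℝ 2 m}

theorem coeFn_apply_add_self (hone : ∀ᵐ ω ∂m, one ω = 1) (hA : ∀ v, A v = v + ⟪one, v⟫ • one)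
    (v : Lp ℝ 2 m) : ⇑(A v + v) =ᵐ[m] fun ω => 2 * v ω + ∫ x, v x ∂m := by
  filter_upwards [Lp.coeFn_add (A v) v,
    hA v ▸ L2.coeFn_add_inner_smul_of_ae_eq_one hone v] with ω hadd hAv
  rw [hadd, Pi.add_apply, hAv]
  ring

theorem ae_neg_integral_le_of_multiplier_eq_zero (hone : ∀ᵐ ω ∂m, one ω = 1)
    (hA : ∀ v, A v = v + ⟪one, v⟫ • one) {Fu Fw p μ : Lp ℝ 2 m} {s : Set Ω}
    (hstat : Fu + ContinuousLinearMap.adjoint A p + μ = 0) (hμ : ∀ᵐ ω ∂m, ω ∈ s → μ ω = 0)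
    (hp : p ≤ᵐ[m] Fw) : ∀ᵐ ω ∂m, ω ∈ s → -∫ x, p x ∂m ≤ |Fu ω| + |Fw ω| := by
  have hAp := L2.coeFn_add_inner_smul_of_ae_eq_one hone p
  rw [← hA, ← ContinuousLinearMap.adjoint_eq_self_of_apply_eq_add_inner_smul one A hA] at hAp
  filter_upwards [Lp.ae_add_eq_zero hstat, Lp.coeFn_add Fu (ContinuousLinearMap.adjoint A p),
    hAp, hμ, hp] with ω hstatω hadd hApω hμω hpω hmem
  rw [hadd, Pi.add_apply, hApω, hμω hmem] at hstatω
  linarith [le_abs_self (Fu ω), le_abs_self (Fw ω)]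

end RankOnePerturbation

theorem kkt_multiplier_L1_bound_general {Ω : Type*} [MeasurableSpace Ω] (m : Measure Ω)
    [IsFiniteMeasure m]
    (Fu Fw Fxi : Lp ℝ 2 m)
    (Ωp0 Ωw : Set Ω)
    (hpos : 0 < m Ωp0)
    (one : Lp ℝ 2 m) (hone : ∀ᵐ ω ∂m, one ω = 1)
    (A : Lp ℝ 2 m →L[ℝ] Lp ℝ 2 m)
    (hA : ∀ v, A v = v + ⟪one, v⟫ • one)
    (c0 : Lp ℝ 2 m)
    (hc0 : c0 = A (|Fu| + |Fw| + |Fxi|) + (|Fu| + |Fw| + |Fxi|))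
    (p μ lam : Lp ℝ 2 m)
    (heq1 : Fu + ContinuousLinearMap.adjoint A p + μ = 0)
    (heq2 : Fw - p + lam = 0)
    (hμ2 : ∀ᵐ ω ∂m, ω ∈ Ωp0 → μ ω = 0)
    (hlam1 : ∀ᵐ ω ∂m, ω ∈ Ωw → lam ω ≤ 0)
    (hlam2 : ∀ᵐ ω ∂m, ω ∉ Ωw → lam ω = 0) :
    ∀ᵐ ω ∂m, (∫ x, |p x| ∂m) ≤ (2 + ((m Ωp0).toReal)⁻¹) * c0 ω := by
  have integrable (f : Lp ℝ 2 m) : Integrable f m := (Lp.memLp f).integrable (by norm_num)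
  set g : Ω → ℝ := fun ω => |Fu ω| + |Fw ω| + |Fxi ω|
  have hg : Integrable g m :=
    ((integrable Fu).abs.add (integrable Fw).abs).add (integrable Fxi).abs
  have hG : ⇑(|Fu| + |Fw| + |Fxi| : Lp ℝ 2 m) =ᵐ[m] g := by
    filter_upwards [Lp.coeFn_add (|Fu| + |Fw| : Lp ℝ 2 m) |Fxi|,
      Lp.coeFn_add (|Fu| : Lp ℝ 2 m) |Fw|, Lp.coeFn_abs Fu, Lp.coeFn_abs Fw,
      Lp.coeFn_abs Fxi] with ω h1 h2 h3 h4 h5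
    rw [h1, Pi.add_apply, h2, Pi.add_apply, h3, h4, h5]
  have hp_le : p ≤ᵐ[m] Fw := Lp.ae_le_of_sub_add_eq_zero heq2 <| by
    filter_upwards [hlam1, hlam2] with ω hin hout
    exact (em (ω ∈ Ωw)).elim hin fun hω => (hout hω).le
  have hmean : -∫ x, p x ∂m ≤ (∫ ω, g ω ∂m) / (m Ωp0).toReal := by
    refine le_integral_div_measureReal_of_ae_le hpos (measure_ne_top _ _) hg
      (ae_of_all _ fun ω => by positivity) ?_
    filter_upwards [ae_neg_integral_le_of_multiplier_eq_zero hone hA heq1 hμ2 hp_le]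
      with ω hω hmem
    linarith [hω hmem, abs_nonneg (Fxi ω)]
  have hFw_le_g : ∫ ω, |Fw ω| ∂m ≤ ∫ ω, g ω ∂m :=
    integral_mono (integrable Fw).abs hg fun ω => by
      linarith [abs_nonneg (Fu ω), abs_nonneg (Fxi ω)]
  filter_upwards [hc0 ▸ coeFn_apply_add_self hone hA (|Fu| + |Fw| + |Fxi|), hG] with ω hc0ω hGω
  calc ∫ x, |p x| ∂m ≤ 2 * ∫ ω, |Fw ω| ∂m - ∫ x, p x ∂m :=
        integral_abs_le_two_mul_integral_abs_sub_integral (integrable p) (integrable Fw) hp_le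
    _ ≤ (2 + ((m Ωp0).toReal)⁻¹) * ∫ x, g x ∂m := by
        rw [add_mul, ← div_eq_inv_mul]; linarith
    _ ≤ (2 + ((m Ωp0).toReal)⁻¹) * c0 ω := by
        rw [hc0ω, hGω, integral_congr_ae hG]
        gcongr
        linarith [show 0 ≤ g ω by positivity]

/-- Bound on `⟨1, |p|⟩` for KKT multipliers of the tightened linear problem LP(β),
in the case `A v = v + ⟨1, v⟩` and `m(Ω⁺⁰) > 0`. The conclusion states that the
constant `∫ |p| dm` is bounded a.e. by the function `(2 + m(Ω⁺⁰)⁻¹) c₀`. -/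
theorem kkt_multiplier_L1_bound {Ω : Type*} [MeasurableSpace Ω] (m : Measure Ω)
    [IsFiniteMeasure m]
    (Fu Fw Fxi : Lp ℝ 2 m)
    (Ω0p Ω00 Ωp0 Ωw β : Set Ω)
    (h0p : MeasurableSet Ω0p) (h00 : MeasurableSet Ω00) (hp0 : MeasurableSet Ωp0)
    (hw : MeasurableSet Ωw) (hβ : MeasurableSet β) (hβ00 : β ⊆ Ω00)
    (hdisj1 : Disjoint Ω0p Ω00) (hdisj2 : Disjoint Ω0p Ωp0) (hdisj3 : Disjoint Ω00 Ωp0)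
    (hcover : Ω0p ∪ Ω00 ∪ Ωp0 = Set.univ)
    (hpos : 0 < m Ωp0)
    (one : Lp ℝ 2 m) (hone : ∀ᵐ ω ∂m, one ω = 1)
    (A : Lp ℝ 2 m →L[ℝ] Lp ℝ 2 m)
    (hA : ∀ v, A v = v + ⟪one, v⟫ • one)
    (c0 : Lp ℝ 2 m)
    (hc0 : c0 = A (|Fu| + |Fw| + |Fxi|) + (|Fu| + |Fw| + |Fxi|))
    (p μ ν lam : Lp ℝ 2 m)
    (heq1 : Fu + ContinuousLinearMap.adjoint A p + μ = 0)
    (heq2 : Fw - p + lam = 0)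
    (heq3 : Fxi - p + ν = 0)
    (hμ1 : ∀ᵐ ω ∂m, ω ∈ Ω00 \ β → μ ω ≤ 0)
    (hμ2 : ∀ᵐ ω ∂m, ω ∈ Ωp0 → μ ω = 0)
    (hν1 : ∀ᵐ ω ∂m, ω ∈ β → ν ω ≤ 0)
    (hν2 : ∀ᵐ ω ∂m, ω ∈ Ω0p → ν ω = 0)
    (hlam1 : ∀ᵐ ω ∂m, ω ∈ Ωw → lam ω ≤ 0)
    (hlam2 : ∀ᵐ ω ∂m, ω ∉ Ωw → lam ω = 0) :
    ∀ᵐ ω ∂m, (∫ x, |p x| ∂m) ≤ (2 + ((m Ωp0).toReal)⁻¹) * c0 ω :=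
  kkt_multiplier_L1_bound_general m Fu Fw Fxi Ωp0 Ωw hpos one hone A hA c0 hc0 p μ lam heq1 heq2 hμ2
    hlam1 hlam2
end
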